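/- Let p and m be natural numbers with 1 ≤ m ≤ p, and let τ₀ ≤ τ₁ ≤ … ≤ τ_{p+1} be a nondecreasing sequence of real numbers in which every value occurs at most m times. Then the Cox–de Boor B-spline B[τ₀,…,τ_{p+1}] is (p − m)-times continuously differentiable on ℝ. In particular, for p = 2s+1 and knot multiplicities at most s+1, the B-spline is of smoothness class C^s. -/

import Mathlib

/-- The Cox–de Boor B-spline of degree `p` with local knot vector `τ₀, …, τ_{p+1}`. -/
noncomputable def coxDeBoor : (p : ℕ) → (Fin (p + 2) → ℝ) → ℝ → ℝ
  | 0, τ, x => if τ 0 ≤ x ∧ x < τ 1 then 1 else 0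
  | p + 1, τ, x =>
      (if τ ⟨p + 1, by omega⟩ - τ 0 = 0 then 0
        else (x - τ 0) / (τ ⟨p + 1, by omega⟩ - τ 0) *
          coxDeBoor p (fun i => τ i.castSucc) x) +
      (if τ ⟨p + 2, by omega⟩ - τ 1 = 0 then 0
        else (τ ⟨p + 2, by omega⟩ - x) / (τ ⟨p + 2, by omega⟩ - τ 1) *
          coxDeBoor p (fun i => τ i.succ) x)

/-!
Away from the knots, differentiating the recursion gives de Boor's formula
`B'[τ₀,…,τ_{p+1}] = p (B[τ₀,…,τ_p] / (τ_p - τ₀) - B[τ₁,…,τ_{p+1}] / (τ_{p+1} - τ₁))`.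

A B-spline of degree `p` is continuous at every point `x` of multiplicity at most `p`: in the
recursion each of the two terms is continuous at `x`, by induction or because its linear weight
vanishes at `x` while the lower-degree B-spline stays bounded, except in the configuration
`τ₀ < x = τ₁ = … = τ_p < τ_{p+1}`. There the B-spline equals `((y - τ₀) / (x - τ₀)) ^ p` to
the left of `x` and `((τ_{p+1} - y) / (τ_{p+1} - x)) ^ p` to the right, and both pieces equal `1`
at `x`.

If all multiplicities are at most `p - 1`, both sides of de Boor's formula are continuous, so the
formula extends across the knots. The two B-splines on its right have degree `p - 1` and no larger
multiplicities, so induction on the order of smoothness gives `C^(p - m)`.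
-/

open Filter Set Topology Finset

lemma coxDeBoor_zero_apply (τ : Fin 2 → ℝ) (x : ℝ) :
    coxDeBoor 0 τ x = if τ 0 ≤ x ∧ x < τ 1 then 1 else 0 := rfl

lemma coxDeBoor_succ_apply (p : ℕ) (τ : Fin (p + 3) → ℝ) (x : ℝ) :
    coxDeBoor (p + 1) τ x =
      (x - τ 0) / (Fin.init τ (Fin.last _) - τ 0) * coxDeBoor p (Fin.init τ) x +
      (τ (Fin.last _) - x) / (τ (Fin.last _) - Fin.tail τ 0) * coxDeBoor p (Fin.tail τ) x := by
  -- The `if _ = 0 then 0` guards of the definition are redundant, as `a / 0 = 0` in Lean.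
  have hdiv (a d b : ℝ) : (if d = 0 then 0 else a / d * b) = a / d * b := by
    split_ifs with h <;> simp [h]
  simp only [coxDeBoor, hdiv]
  rfl

lemma coxDeBoor_succ (p : ℕ) (τ : Fin (p + 3) → ℝ) :
    coxDeBoor (p + 1) τ = fun x =>
      (x - τ 0) / (Fin.init τ (Fin.last _) - τ 0) * coxDeBoor p (Fin.init τ) x +
      (τ (Fin.last _) - x) / (τ (Fin.last _) - Fin.tail τ 0) * coxDeBoor p (Fin.tail τ) x :=
  funext (coxDeBoor_succ_apply p τ)

lemma Monotone.fin_init {n : ℕ} {τ : Fin (n + 1) → ℝ} (hτ : Monotone τ) :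
    Monotone (Fin.init τ) :=
  hτ.comp Fin.strictMono_castSucc.monotone

lemma Monotone.fin_tail {n : ℕ} {τ : Fin (n + 1) → ℝ} (hτ : Monotone τ) :
    Monotone (Fin.tail τ) :=
  hτ.comp Fin.strictMono_succ.monotone

theorem coxDeBoor_eq_zero_of_notMem {p : ℕ} {τ : Fin (p + 2) → ℝ} (hτ : Monotone τ) {x : ℝ}
    (hx : x ∉ Ico (τ 0) (τ (Fin.last _))) : coxDeBoor p τ x = 0 := by
  induction p with
  | zero => simpa [coxDeBoor_zero_apply] using hx
  | succ q ih =>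
    have hL : x ∉ Ico (Fin.init τ 0) (Fin.init τ (Fin.last _)) := fun h =>
      hx ⟨h.1, h.2.trans_le (hτ (Fin.le_last _))⟩
    have hR : x ∉ Ico (Fin.tail τ 0) (Fin.tail τ (Fin.last _)) := fun h =>
      hx ⟨(hτ (Fin.zero_le _)).trans h.1, h.2⟩
    rw [coxDeBoor_succ_apply, ih hτ.fin_init hL, ih hτ.fin_tail hR, mul_zero, mul_zero, add_zero]

lemma abs_mul_coxDeBoor_le {p : ℕ} {τ : Fin (p + 2) → ℝ} (hτ : Monotone τ) {w : ℝ → ℝ}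
    (hw : ∀ y ∈ Ico (τ 0) (τ (Fin.last _)), |w y| ≤ 1) (x : ℝ) :
    |w x * coxDeBoor p τ x| ≤ |coxDeBoor p τ x| := by
  by_cases hx : x ∈ Ico (τ 0) (τ (Fin.last _))
  · rw [abs_mul]
    exact mul_le_of_le_one_left (abs_nonneg _) (hw x hx)
  · simp [coxDeBoor_eq_zero_of_notMem hτ hx]

lemma abs_sub_div_sub_le_one {a b y : ℝ} (hy : y ∈ Ico a b) : |(y - a) / (b - a)| ≤ 1 := by
  have hab : 0 < b - a := sub_pos.2 (hy.1.trans_lt hy.2)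
  rw [abs_div, abs_of_pos hab, div_le_one hab, abs_le]
  constructor <;> linarith [hy.1, hy.2]

lemma abs_sub_div_sub_le_one' {a b y : ℝ} (hy : y ∈ Ico a b) : |(b - y) / (b - a)| ≤ 1 := by
  have hab : 0 < b - a := sub_pos.2 (hy.1.trans_lt hy.2)
  rw [abs_div, abs_of_pos hab, div_le_one hab, abs_le]
  constructor <;> linarith [hy.1, hy.2]

theorem abs_coxDeBoor_le {p : ℕ} {τ : Fin (p + 2) → ℝ} (hτ : Monotone τ) (x : ℝ) :
    |coxDeBoor p τ x| ≤ 2 ^ p := by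
  induction p with
  | zero => by_cases h : τ 0 ≤ x ∧ x < τ 1 <;> simp [coxDeBoor_zero_apply, h]
  | succ q ih =>
    rw [coxDeBoor_succ_apply, pow_succ, mul_two]
    refine (abs_add_le _ _).trans (add_le_add ?_ ?_)
    · exact (abs_mul_coxDeBoor_le hτ.fin_init (fun y => abs_sub_div_sub_le_one) x).trans
        (ih hτ.fin_init)
    · exact (abs_mul_coxDeBoor_le hτ.fin_tail (fun y => abs_sub_div_sub_le_one') x).trans
        (ih hτ.fin_tail)

noncomputable def knotMult {n : ℕ} (τ : Fin n → ℝ) (x : ℝ) : ℕ := #{i | τ i = x}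

lemma knotMult_eq_init_add {n : ℕ} (τ : Fin (n + 1) → ℝ) (x : ℝ) :
    knotMult τ x = knotMult (Fin.init τ) x + if τ (Fin.last n) = x then 1 else 0 := by
  simp only [knotMult, card_filter, Fin.sum_univ_castSucc]
  rfl

lemma knotMult_eq_add_tail {n : ℕ} (τ : Fin (n + 1) → ℝ) (x : ℝ) :
    knotMult τ x = (if τ 0 = x then 1 else 0) + knotMult (Fin.tail τ) x := by
  simp only [knotMult, card_filter, Fin.sum_univ_succ]
  rfl

lemma knotMult_init_le {n : ℕ} (τ : Fin (n + 1) → ℝ) (x : ℝ) :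
    knotMult (Fin.init τ) x ≤ knotMult τ x :=
  (knotMult_eq_init_add τ x).ge.trans' (Nat.le_add_right _ _)

lemma knotMult_tail_le {n : ℕ} (τ : Fin (n + 1) → ℝ) (x : ℝ) :
    knotMult (Fin.tail τ) x ≤ knotMult τ x :=
  (knotMult_eq_add_tail τ x).ge.trans' (Nat.le_add_left _ _)

lemma knotMult_eq_zero_iff {n : ℕ} {τ : Fin n → ℝ} {x : ℝ} :
    knotMult τ x = 0 ↔ ∀ i, τ i ≠ x := by
  simp [knotMult, filter_eq_empty_iff]

lemma eq_of_le_knotMult {n : ℕ} {τ : Fin (n + 1) → ℝ} {x : ℝ} (h : n ≤ knotMult τ x)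
    {i j : Fin (n + 1)} (hj : τ j ≠ x) (hij : i ≠ j) : τ i = x := by
  have hsub : ({i | τ i = x} : Finset _) ⊆ univ.erase j := fun k hk =>
    mem_erase.2 ⟨fun hkj => hj (hkj ▸ (mem_filter.1 hk).2), mem_univ k⟩
  have heq := Finset.eq_of_subset_of_card_le hsub (by simpa [card_erase_of_mem, knotMult] using h)
  have hi : i ∈ ({i | τ i = x} : Finset _) := heq ▸ mem_erase.2 ⟨hij, mem_univ i⟩
  exact (mem_filter.1 hi).2

noncomputable def coxDeBoorDeriv : (p : ℕ) → (Fin (p + 2) → ℝ) → ℝ → ℝ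
  | 0, _, _ => 0
  | p + 1, τ, x => (p + 1) *
      (coxDeBoor p (Fin.init τ) x / (Fin.init τ (Fin.last _) - τ 0) -
        coxDeBoor p (Fin.tail τ) x / (τ (Fin.last _) - Fin.tail τ 0))

lemma coxDeBoorDeriv_succ_apply (p : ℕ) (τ : Fin (p + 3) → ℝ) (x : ℝ) :
    coxDeBoorDeriv (p + 1) τ x = (p + 1) *
      (coxDeBoor p (Fin.init τ) x / (Fin.init τ (Fin.last _) - τ 0) -
        coxDeBoor p (Fin.tail τ) x / (τ (Fin.last _) - Fin.tail τ 0)) := rfl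

lemma coxDeBoorDeriv_succ (p : ℕ) (τ : Fin (p + 3) → ℝ) :
    coxDeBoorDeriv (p + 1) τ = fun x => (p + 1) *
      (coxDeBoor p (Fin.init τ) x / (Fin.init τ (Fin.last _) - τ 0) -
        coxDeBoor p (Fin.tail τ) x / (τ (Fin.last _) - Fin.tail τ 0)) := rfl

lemma div_mul_coxDeBoorDeriv_add_div_mul_coxDeBoorDeriv (p : ℕ) {τ : Fin (p + 3) → ℝ}
    (hτ : Monotone τ) (x : ℝ) :
    (x - τ 0) / (Fin.init τ (Fin.last _) - τ 0) * coxDeBoorDeriv p (Fin.init τ) x +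
      (τ (Fin.last _) - x) / (τ (Fin.last _) - Fin.tail τ 0) * coxDeBoorDeriv p (Fin.tail τ) x =
    p * (coxDeBoor p (Fin.init τ) x / (Fin.init τ (Fin.last _) - τ 0) -
      coxDeBoor p (Fin.tail τ) x / (τ (Fin.last _) - Fin.tail τ 0)) := by
  cases p with
  | zero => simp [coxDeBoorDeriv]
  | succ q =>
    simp only [coxDeBoorDeriv_succ_apply, coxDeBoor_succ_apply, Fin.tail_init_eq_init_tail]
    simp only [Fin.init, Fin.tail, Fin.succ_last, Fin.succ_castSucc, Fin.castSucc_zero,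
      Fin.succ_zero_eq_one]
    set a := τ 0
    set b := τ 1
    set c := τ (Fin.last (q + 2)).castSucc
    set d := τ (Fin.last (q + 3))
    have hbc : b ≤ c := hτ (Fin.one_le_of_ne_zero (by simp [Fin.ext_iff]))
    push_cast
    -- Only the middle B-spline `B[τ₁,…,τ_{q+2}]` needs care: if `b = c` it drops out (`a / 0 = 0`),
    -- otherwise its coefficients agree because `(d - x) / (d - b) + (x - b) / (d - b) = 1` and
    -- `(c - x) / (c - a) + (x - a) / (c - a) = 1`.
    rcases hbc.eq_or_lt with hbc | hbc
    · rw [hbc, sub_self, div_zero, div_zero]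
      ring
    · have hac : c - a ≠ 0 := (sub_pos.2 (hbc.trans_le' (hτ (Fin.zero_le _)))).ne'
      have hbd : d - b ≠ 0 := (sub_pos.2 (hbc.trans_le (hτ (Fin.le_last _)))).ne'
      have hcb : c - b ≠ 0 := (sub_pos.2 hbc).ne'
      field_simp
      ring

lemma eventually_le_iff_of_ne {a x : ℝ} (h : a ≠ x) : ∀ᶠ y in 𝓝 x, (a ≤ y ↔ a ≤ x) := by
  rcases h.lt_or_gt with h | h
  · filter_upwards [lt_mem_nhds h] with y hy using iff_of_true hy.le h.le
  · filter_upwards [gt_mem_nhds h] with y hy using iff_of_false hy.not_ge h.not_ge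

lemma eventually_lt_iff_of_ne {b x : ℝ} (h : x ≠ b) : ∀ᶠ y in 𝓝 x, (y < b ↔ x < b) := by
  rcases h.lt_or_gt with h | h
  · filter_upwards [gt_mem_nhds h] with y hy using iff_of_true hy h
  · filter_upwards [lt_mem_nhds h] with y hy using iff_of_false hy.not_gt h.not_gt

theorem hasDerivAt_coxDeBoor_of_forall_ne {p : ℕ} {τ : Fin (p + 2) → ℝ} (hτ : Monotone τ)
    {x : ℝ} (hx : ∀ i, τ i ≠ x) : HasDerivAt (coxDeBoor p τ) (coxDeBoorDeriv p τ x) x := by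
  induction p with
  | zero =>
    have hconst : coxDeBoor 0 τ =ᶠ[𝓝 x] fun _ => coxDeBoor 0 τ x := by
      filter_upwards [eventually_le_iff_of_ne (hx 0), eventually_lt_iff_of_ne (hx 1).symm]
        with y h₀ h₁
      simp only [coxDeBoor_zero_apply, h₀, h₁]
    exact hconst.hasDerivAt_iff.2 (hasDerivAt_const x _)
  | succ q ih =>
    have hL := ih hτ.fin_init fun i => hx i.castSucc
    have hR := ih hτ.fin_tail fun i => hx i.succ
    have hwL := ((hasDerivAt_id x).sub_const (τ 0)).div_const (Fin.init τ (Fin.last _) - τ 0)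
    have hwR := ((hasDerivAt_id x).const_sub (τ (Fin.last _))).div_const
      (τ (Fin.last _) - Fin.tail τ 0)
    rw [coxDeBoor_succ]
    refine ((hwL.mul hL).add (hwR.mul hR)).congr_deriv ?_
    rw [coxDeBoorDeriv_succ_apply, id]
    linear_combination div_mul_coxDeBoorDeriv_add_div_mul_coxDeBoorDeriv q hτ x

lemma coxDeBoor_eq_of_forall_ne_zero {p : ℕ} {τ : Fin (p + 2) → ℝ} {c y : ℝ}
    (hτ : ∀ i ≠ 0, τ i = c) (hy : y ∈ Ico (τ 0) c) :
    coxDeBoor p τ y = ((y - τ 0) / (c - τ 0)) ^ p := by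
  induction p with
  | zero => simp [coxDeBoor_zero_apply, hτ 1 one_ne_zero, hy.1, hy.2]
  | succ q ih =>
    have hlast : Fin.init τ (Fin.last _) = c :=
      hτ _ (Fin.castSucc_ne_zero_iff.2 Fin.last_pos.ne')
    have hτ₁ : Fin.tail τ 0 = c := hτ _ (Fin.succ_ne_zero 0)
    rw [coxDeBoor_succ_apply, hlast, hτ (Fin.last _) Fin.last_pos.ne', hτ₁, sub_self, div_zero,
      zero_mul, add_zero,
      ih (τ := Fin.init τ) (fun i hi => hτ _ (Fin.castSucc_ne_zero_iff.2 hi)) hy]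
    exact (pow_succ' _ _).symm

lemma coxDeBoor_eq_of_forall_ne_last {p : ℕ} {τ : Fin (p + 2) → ℝ} {c y : ℝ}
    (hτ : ∀ i ≠ Fin.last _, τ i = c) (hy : y ∈ Ico c (τ (Fin.last _))) :
    coxDeBoor p τ y = ((τ (Fin.last _) - y) / (τ (Fin.last _) - c)) ^ p := by
  induction p with
  | zero => simp [coxDeBoor_zero_apply, hτ 0 Fin.last_pos.ne, hy.1, show y < τ 1 from hy.2]
  | succ q ih =>
    have hlast : Fin.init τ (Fin.last _) = c := hτ _ (Fin.castSucc_lt_last _).ne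
    have hτ₁ : Fin.tail τ 0 = c := hτ _ ((Fin.succ_ne_last_iff _).2 Fin.last_pos.ne)
    rw [coxDeBoor_succ_apply, hlast, hτ 0 Fin.last_pos.ne, hτ₁, sub_self, div_zero,
      zero_mul, zero_add,
      ih (τ := Fin.tail τ) (fun i hi => hτ _ ((Fin.succ_ne_last_iff _).2 hi)) hy]
    exact (pow_succ' _ _).symm

theorem continuousAt_coxDeBoor_of_inner_knots_eq {q : ℕ} {τ : Fin (q + 3) → ℝ} (hτ : Monotone τ)
    {x : ℝ} (hL : ∀ i ≠ 0, Fin.init τ i = x) (hR : ∀ i ≠ Fin.last _, Fin.tail τ i = x)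
    (h0 : τ 0 ≠ x) (hlast : τ (Fin.last _) ≠ x) : ContinuousAt (coxDeBoor (q + 1) τ) x := by
  have hLx : Fin.init τ (Fin.last _) = x := hL _ Fin.last_pos.ne'
  have hRx : Fin.tail τ 0 = x := hR _ Fin.last_pos.ne
  have h0x : τ 0 < x :=
    ((hτ (Fin.zero_le _) : τ 0 ≤ Fin.init τ (Fin.last _)).trans_eq hLx).lt_of_ne h0
  have hxlast : x < τ (Fin.last _) :=
    (hRx.symm.trans_le (hτ (Fin.le_last _) : Fin.tail τ 0 ≤ τ (Fin.last _))).lt_of_ne hlast.symm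
  have hleft : ∀ y ∈ Ico (τ 0) x,
      coxDeBoor (q + 1) τ y = ((y - τ 0) / (x - τ 0)) ^ (q + 1) := by
    intro y hy
    have hRy : coxDeBoor q (Fin.tail τ) y = 0 :=
      coxDeBoor_eq_zero_of_notMem hτ.fin_tail fun h => (hRx ▸ h.1).not_gt hy.2
    rw [coxDeBoor_succ_apply, hLx, hRy, coxDeBoor_eq_of_forall_ne_zero hL hy, mul_zero, add_zero]
    exact (pow_succ' _ _).symm
  have hright : ∀ y ∈ Ico x (τ (Fin.last _)),
      coxDeBoor (q + 1) τ y = ((τ (Fin.last _) - y) / (τ (Fin.last _) - x)) ^ (q + 1) := by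
    intro y hy
    have hLy : coxDeBoor q (Fin.init τ) y = 0 :=
      coxDeBoor_eq_zero_of_notMem hτ.fin_init fun h => (hLx ▸ h.2).not_ge hy.1
    rw [coxDeBoor_succ_apply, hRx, hLy, coxDeBoor_eq_of_forall_ne_last hR hy, mul_zero, zero_add]
    exact (pow_succ' _ _).symm
  have hx : coxDeBoor (q + 1) τ x = 1 := by
    rw [hright x ⟨le_rfl, hxlast⟩, div_self (sub_pos.2 hxlast).ne', one_pow]
  rw [continuousAt_iff_continuous_left_right, ← continuousWithinAt_Iio_iff_Iic]
  constructor
  · refine ContinuousWithinAt.congr_of_eventuallyEq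
      (f := fun y => ((y - τ 0) / (x - τ 0)) ^ (q + 1)) (by fun_prop) ?_ ?_
    · filter_upwards [Ioo_mem_nhdsLT h0x] with y hy using hleft y (Ioo_subset_Ico_self hy)
    · rw [hx, div_self (sub_pos.2 h0x).ne', one_pow]
  · refine ContinuousWithinAt.congr_of_eventuallyEq_of_mem
      (f := fun y => ((τ (Fin.last _) - y) / (τ (Fin.last _) - x)) ^ (q + 1))
      (by fun_prop) ?_ self_mem_Ici
    filter_upwards [Ico_mem_nhdsGE hxlast] with y hy using hright y hy

lemma continuousAt_mul_of_eq_zero_of_bounded {X : Type*} [TopologicalSpace X] {f g : X → ℝ}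
    {x : X} {M : ℝ} (hf : ContinuousAt f x) (hfx : f x = 0) (hg : ∀ y, |g y| ≤ M) :
    ContinuousAt (fun y => f y * g y) x := by
  rw [ContinuousAt, hfx, zero_mul]
  exact (hfx ▸ hf.tendsto).zero_mul_isBoundedUnder_le
    ⟨M, eventually_map.2 (Eventually.of_forall hg)⟩

theorem continuousAt_coxDeBoor {p : ℕ} {τ : Fin (p + 2) → ℝ} (hτ : Monotone τ) {x : ℝ}
    (hx : knotMult τ x ≤ p) : ContinuousAt (coxDeBoor p τ) x := by
  induction p with
  | zero =>
    exact (hasDerivAt_coxDeBoor_of_forall_ne hτ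
      (knotMult_eq_zero_iff.1 (Nat.le_zero.1 hx))).continuousAt
  | succ q ih =>
    have hkL := knotMult_eq_init_add τ x
    have hkR := knotMult_eq_add_tail τ x
    have hwL : ContinuousAt (fun y => (y - τ 0) / (Fin.init τ (Fin.last _) - τ 0)) x := by
      fun_prop
    have hwR :
        ContinuousAt (fun y => (τ (Fin.last _) - y) / (τ (Fin.last _) - Fin.tail τ 0)) x := by
      fun_prop
    have termL (h : τ 0 = x ∨ knotMult (Fin.init τ) x ≤ q) : ContinuousAt (fun y => (y - τ 0) /
        (Fin.init τ (Fin.last _) - τ 0) * coxDeBoor q (Fin.init τ) y) x := by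
      rcases h with h0 | h
      · exact continuousAt_mul_of_eq_zero_of_bounded hwL (by simp [h0])
          (abs_coxDeBoor_le hτ.fin_init)
      · exact hwL.mul (ih hτ.fin_init h)
    have termR (h : τ (Fin.last _) = x ∨ knotMult (Fin.tail τ) x ≤ q) : ContinuousAt
        (fun y => (τ (Fin.last _) - y) / (τ (Fin.last _) - Fin.tail τ 0) *
          coxDeBoor q (Fin.tail τ) y) x := by
      rcases h with hlast | h
      · exact continuousAt_mul_of_eq_zero_of_bounded hwR (by simp [hlast])
          (abs_coxDeBoor_le hτ.fin_tail)
      · exact hwR.mul (ih hτ.fin_tail h)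
    rw [coxDeBoor_succ]
    by_cases h0 : τ 0 = x <;> by_cases hlast : τ (Fin.last _) = x <;>
      simp only [h0, hlast, if_true, if_false, add_zero, zero_add] at hkL hkR
    · exact (termL (.inl h0)).add (termR (.inl hlast))
    · exact (termL (.inl h0)).add (termR (.inr (by omega)))
    · exact (termL (.inr (by omega))).add (termR (.inl hlast))
    · rcases hx.lt_or_eq with hx | hx
      · exact (termL (.inr (by omega))).add (termR (.inr (by omega)))
      · exact coxDeBoor_succ q τ ▸ continuousAt_coxDeBoor_of_inner_knots_eq hτ
          (fun i hi => eq_of_le_knotMult (j := 0) (by omega) h0 hi)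
          (fun i hi => eq_of_le_knotMult (j := Fin.last _) (by omega) hlast hi) h0 hlast

theorem hasDerivAt_of_eventually_hasDerivAt {E : Type*} [NormedAddCommGroup E] [NormedSpace ℝ E]
    {f g : ℝ → E} {x : ℝ} (hd : ∀ᶠ y in 𝓝[≠] x, HasDerivAt f (g y) y) (hf : ContinuousAt f x)
    (hg : ContinuousAt g x) : HasDerivAt f (g x) x := by
  have hdiff : DifferentiableOn ℝ f {y | HasDerivAt f (g y) y} := fun y hy =>
    hy.differentiableAt.differentiableWithinAt
  have hderiv (l : Filter ℝ) (hl : l ≤ 𝓝[≠] x) : Tendsto (deriv f) l (𝓝 (g x)) :=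
    (hg.tendsto.mono_left (hl.trans nhdsWithin_le_nhds)).congr'
      ((Eventually.filter_mono hl hd).mono fun y hy => hy.deriv.symm)
  have hGT : 𝓝[>] x ≤ 𝓝[≠] x := nhdsWithin_mono _ fun y hy => ne_of_gt hy
  have hLT : 𝓝[<] x ≤ 𝓝[≠] x := nhdsWithin_mono _ fun y hy => ne_of_lt hy
  have hright := hasDerivWithinAt_Ici_of_tendsto_deriv hdiff hf.continuousWithinAt (hGT hd)
    (hderiv _ hGT)
  have hleft := hasDerivWithinAt_Iic_of_tendsto_deriv hdiff hf.continuousWithinAt (hLT hd)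
    (hderiv _ hLT)
  simpa using hleft.union hright

lemma eventually_forall_ne_nhdsNE {n : ℕ} (τ : Fin n → ℝ) (x : ℝ) :
    ∀ᶠ y in 𝓝[≠] x, ∀ i, τ i ≠ y := by
  refine eventually_all.2 fun i => ?_
  by_cases h : τ i = x
  · exact h ▸ eventually_nhdsWithin_of_forall fun y hy => Ne.symm hy
  · exact eventually_nhdsWithin_of_eventually_nhds ((eventually_ne_nhds (Ne.symm h)).mono
      fun y hy => Ne.symm hy)

theorem hasDerivAt_coxDeBoor {p : ℕ} {τ : Fin (p + 3) → ℝ} (hτ : Monotone τ) {x : ℝ}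
    (hx : knotMult τ x ≤ p) : HasDerivAt (coxDeBoor (p + 1) τ) (coxDeBoorDeriv (p + 1) τ x) x := by
  refine hasDerivAt_of_eventually_hasDerivAt
    ((eventually_forall_ne_nhdsNE τ x).mono fun y hy => hasDerivAt_coxDeBoor_of_forall_ne hτ hy)
    (continuousAt_coxDeBoor hτ (by omega)) ?_
  have hL := continuousAt_coxDeBoor hτ.fin_init ((knotMult_init_le τ x).trans hx)
  have hR := continuousAt_coxDeBoor hτ.fin_tail ((knotMult_tail_le τ x).trans hx)
  rw [coxDeBoorDeriv_succ]
  fun_prop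

theorem contDiff_coxDeBoor (n : ℕ) {p : ℕ} {τ : Fin (p + 2) → ℝ} (hτ : Monotone τ)
    (hmult : ∀ r, knotMult τ r + n ≤ p) : ContDiff ℝ n (coxDeBoor p τ) := by
  induction n generalizing p with
  | zero =>
    exact contDiff_zero.2
      (continuous_iff_continuousAt.2 fun x => continuousAt_coxDeBoor hτ (hmult x))
  | succ n ih =>
    obtain ⟨q, rfl⟩ : ∃ q, p = q + 1 := ⟨p - 1, by have := hmult (τ 0); omega⟩
    have hD (x : ℝ) : HasDerivAt (coxDeBoor (q + 1) τ) (coxDeBoorDeriv (q + 1) τ x) x :=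
      hasDerivAt_coxDeBoor hτ (by have := hmult x; omega)
    have hL := ih hτ.fin_init fun r => by have := knotMult_init_le τ r; have := hmult r; omega
    have hR := ih hτ.fin_tail fun r => by have := knotMult_tail_le τ r; have := hmult r; omega
    rw [Nat.cast_succ, contDiff_succ_iff_deriv]
    refine ⟨fun x => (hD x).differentiableAt, by simp, ?_⟩
    rw [funext fun x => (hD x).deriv, coxDeBoorDeriv_succ]
    exact contDiff_const.mul ((hL.div_const _).sub (hR.div_const _))

theorem coxDeBoor_contDiff_general (p m : ℕ) (hm₂ : m ≤ p)
    (τ : Fin (p + 2) → ℝ) (hτ : Monotone τ)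
    (hmult : ∀ r : ℝ, (Finset.univ.filter (fun i : Fin (p + 2) => τ i = r)).card ≤ m) :
    ContDiff ℝ ((p - m : ℕ) : ℕ∞) (coxDeBoor p τ) :=
  contDiff_coxDeBoor (p - m) hτ fun r => by have := hmult r; unfold knotMult; omega

/-- Smoothness of B-splines: if every value occurs in the local knot vector
`τ₀ ≤ … ≤ τ_{p+1}` with multiplicity at most `m`, where `1 ≤ m ≤ p`, then the
degree-`p` B-spline is `(p - m)`-times continuously differentiable on `ℝ`. -/
theorem coxDeBoor_contDiff (p m : ℕ) (hm₁ : 1 ≤ m) (hm₂ : m ≤ p)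
    (τ : Fin (p + 2) → ℝ) (hτ : Monotone τ)
    (hmult : ∀ r : ℝ, (Finset.univ.filter (fun i : Fin (p + 2) => τ i = r)).card ≤ m) :
    ContDiff ℝ ((p - m : ℕ) : ℕ∞) (coxDeBoor p τ) :=
  coxDeBoor_contDiff_general p m hm₂ τ hτ hmult
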